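/- For the query language CRPQ[=], some constraints expressible in GGD are not expressible in PG-Keys. In particular, the GGD φ = (x → y → z, ∅ ⇒ x → z, ∅), asserting that whenever there are edges from x to y and from y to z there is also an edge from x to z, is not expressible by any finite set of PG-Keys over CRPQ[=]. -/
import Mathlib


namespace PGC

/-- Objects (vertex/edge identifiers). -/
abbrev Obj := ℕ
/-- Labels. -/
abbrev Lab := ℕ
/-- Property keys. -/
abbrev Key := ℕ
/-- Data values. -/
abbrev Val := ℕ
/-- Variables. -/
abbrev Var := ℕ

/-- A property graph `G = (V, E, η, λ, π)`. -/
structure PGraph where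
  V : Finset Obj
  E : Finset Obj
  disj : Disjoint V E
  src : Obj → Obj
  tgt : Obj → Obj
  lab : Obj → Finset Lab
  prop : Obj → Key → Option Val
  src_mem : ∀ e ∈ E, src e ∈ V
  tgt_mem : ∀ e ∈ E, tgt e ∈ V

/-- A walk (path), given by its start vertex and its list of edges. -/
structure Walk where
  start : Obj
  edges : List Obj
deriving DecidableEq

/-- The list of edges forms a walk in `G` starting at the given vertex. -/
def PGraph.walkFrom (G : PGraph) : Obj → List Obj → Prop
  | u, [] => u ∈ G.V
  | u, e :: es => e ∈ G.E ∧ G.src e = u ∧ G.walkFrom (G.tgt e) es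

/-- The final vertex of a walk. -/
def Walk.endpt (G : PGraph) (w : Walk) : Obj :=
  w.edges.foldl (fun _ e => G.tgt e) w.start

/-- What a variable can be bound to: an object (vertex or edge) or a walk. -/
inductive Target where
  | obj (o : Obj)
  | walk (w : Walk)
deriving DecidableEq

/-- Atoms of conjunctive (regular path) queries. -/
inductive Atom where
  | vertex (x : Var) (ls : List Lab)
  | edge (x e y : Var) (ls : List Lab)
  | path (x p y : Var) (r : RegularExpression Lab)

def Atom.vars : Atom → Finset Var
  | .vertex x _ => {x}
  | .edge x e y _ => {x, e, y}
  | .path x p y _ => {x, p, y}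

def Atom.isPath : Atom → Prop
  | .path _ _ _ _ => True
  | _ => False

/-- A query is a finite conjunction of atoms. -/
abbrev Query := List Atom

/-- Variables of a query. -/
def qvars (Q : Query) : Finset Var := Q.foldr (fun a s => a.vars ∪ s) ∅

/-- Satisfaction of an atom by an assignment `h` in a property graph. -/
def Atom.sat (G : PGraph) (h : Var → Target) : Atom → Prop
  | .vertex x ls => ∃ o, h x = .obj o ∧ o ∈ G.V ∧ ∀ l ∈ ls, l ∈ G.lab o
  | .edge x e y ls => ∃ ox oe oy, h x = .obj ox ∧ h e = .obj oe ∧ h y = .obj oy ∧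
      oe ∈ G.E ∧ G.src oe = ox ∧ G.tgt oe = oy ∧ ∀ l ∈ ls, l ∈ G.lab oe
  | .path x p y r => ∃ ox w oy, h x = .obj ox ∧ h p = .walk w ∧ h y = .obj oy ∧
      w.start = ox ∧ G.walkFrom ox w.edges ∧ Walk.endpt G w = oy ∧
      ∃ word : List Lab, word ∈ r.matches' ∧
        List.Forall₂ (fun e l => l ∈ G.lab e) w.edges word

/-- A match of a query `Q` over `G` (all-walk semantics). -/
def Match (G : PGraph) (Q : Query) (h : Var → Target) : Prop :=
  ∀ a ∈ Q, a.sat G h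

/-- The property value `h(x).a`, if defined. -/
def propOf (G : PGraph) (h : Var → Target) (x : Var) (a : Key) : Option Val :=
  match h x with
  | .obj o => G.prop o a
  | .walk _ => none

/-- Data predicates. -/
inductive Pred where
  | propEq (x : Var) (a : Key) (y : Var) (b : Key)   -- x.a = y.b
  | propEqC (x : Var) (a : Key) (c : Val)            -- x.a = c
  | ex (x : Var) (a : Key)                           -- ex(x.a)
  | idEq (x y : Var)                                 -- x = y
  | propNe (x : Var) (a : Key) (y : Var) (b : Key)   -- x.a ≠ y.b
  | propNeC (x : Var) (a : Key) (c : Val)            -- x.a ≠ c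
  | idNe (x y : Var)                                 -- x ≠ y

/-- Satisfaction of a data predicate. -/
def Pred.sat (G : PGraph) (h : Var → Target) : Pred → Prop
  | .propEq x a y b => ∃ v, propOf G h x a = some v ∧ propOf G h y b = some v
  | .propEqC x a c => propOf G h x a = some c
  | .ex x a => (propOf G h x a).isSome
  | .idEq x y => h x = h y
  | .propNe x a y b => ∃ v w, propOf G h x a = some v ∧ propOf G h y b = some w ∧ v ≠ w
  | .propNeC x a c => ∃ v, propOf G h x a = some v ∧ v ≠ c
  | .idNe x y => h x ≠ h y

def Pred.vars : Pred → Finset Var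
  | .propEq x _ y _ => {x, y}
  | .propEqC x _ _ => {x}
  | .ex x _ => {x}
  | .idEq x y => {x, y}
  | .propNe x _ y _ => {x, y}
  | .propNeC x _ _ => {x}
  | .idNe x y => {x, y}

/-- `h ⊨ C`: every predicate of `C` holds under `h`. -/
def satC (G : PGraph) (h : Var → Target) (C : List Pred) : Prop :=
  ∀ p ∈ C, p.sat G h

/-- A predicate uses only equality (no inequality). -/
def Pred.isEq : Pred → Prop
  | .propEq _ _ _ _ => True
  | .propEqC _ _ _ => True
  | .ex _ _ => True
  | .idEq _ _ => True
  | _ => False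

/-- A predicate is an equality with a constant. -/
def Pred.isEqC : Pred → Prop
  | .propEqC _ _ _ => True
  | _ => False

/-- A query language: whether path atoms are allowed, and which data predicates are allowed. -/
structure QLang where
  allowPaths : Bool
  allowPred : Pred → Prop

/-- CQ[=] -/
def CQeq : QLang := ⟨false, Pred.isEq⟩
/-- CQ[=,≠] -/
def CQeqNe : QLang := ⟨false, fun _ => True⟩
/-- CRPQ[=] -/
def CRPQeq : QLang := ⟨true, Pred.isEq⟩
/-- CRPQ[=,≠] -/
def CRPQeqNe : QLang := ⟨true, fun _ => True⟩
/-- CRPQ[=_c] -/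
def CRPQeqC : QLang := ⟨true, Pred.isEqC⟩

/-- The query belongs to the query language. -/
def QueryIn (L : QLang) (Q : Query) : Prop :=
  ∀ a ∈ Q, a.isPath → L.allowPaths = true

/-- All predicates belong to the query language. -/
def PredsIn (L : QLang) (C : List Pred) : Prop :=
  ∀ p ∈ C, L.allowPred p

/-- Graph functional dependency `(Q(x̄,ȳ), C_s(x̄,ȳ) ⇒ C_t(x̄))`. -/
structure GFD where
  shared : List Var
  Q : Query
  Cs : List Pred
  Ct : List Pred

def GFD.wf (L : QLang) (φ : GFD) : Prop :=
  QueryIn L φ.Q ∧ PredsIn L φ.Cs ∧ PredsIn L φ.Ct ∧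
  φ.shared.toFinset ⊆ qvars φ.Q ∧
  (∀ p ∈ φ.Ct, p.vars ⊆ φ.shared.toFinset) ∧
  (∀ p ∈ φ.Cs, p.vars ⊆ qvars φ.Q)

def GFD.sat (φ : GFD) (G : PGraph) : Prop :=
  ∀ h, Match G φ.Q h → satC G h φ.Cs → satC G h φ.Ct

def GFD.allVars (φ : GFD) : Finset Var :=
  qvars φ.Q ∪ φ.shared.toFinset ∪ (φ.Cs ++ φ.Ct).foldr (fun p s => p.vars ∪ s) ∅

/-- Graph generating dependency `(Q_s(x̄,ȳ), C_s(x̄,ȳ) ⇒ Q_t(x̄,z̄), C_t(x̄,z̄))`. -/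
structure GGD where
  shared : List Var
  Qs : Query
  Cs : List Pred
  Qt : Query
  Ct : List Pred

def GGD.wf (L : QLang) (φ : GGD) : Prop :=
  QueryIn L φ.Qs ∧ QueryIn L φ.Qt ∧ PredsIn L φ.Cs ∧ PredsIn L φ.Ct ∧
  φ.shared.toFinset ⊆ qvars φ.Qs ∧
  qvars φ.Qs ∩ qvars φ.Qt ⊆ φ.shared.toFinset ∧
  (∀ p ∈ φ.Cs, p.vars ⊆ qvars φ.Qs) ∧
  (∀ p ∈ φ.Ct, p.vars ⊆ qvars φ.Qt ∪ φ.shared.toFinset)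

def GGD.sat (φ : GGD) (G : PGraph) : Prop :=
  ∀ hs, Match G φ.Qs hs → satC G hs φ.Cs →
    ∃ ht, Match G φ.Qt ht ∧ (∀ v ∈ φ.shared, ht v = hs v) ∧ satC G ht φ.Ct

/-- Assertion keywords of PG-Keys. -/
inductive KW where
  | mandatory
  | exclusive
  | singleton
deriving DecidableEq

/-- Entries of a key expression: a variable or a property reference `v.a`. -/
inductive KeyExpr where
  | var (v : Var)
  | ref (v : Var) (a : Key)

def KeyExpr.vars : KeyExpr → Finset Var
  | .var v => {v}
  | .ref v _ => {v}

/-- Value of a key-expression entry under a match, if defined. -/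
def KeyExpr.eval (G : PGraph) (h : Var → Target) : KeyExpr → Option (Target ⊕ Val)
  | .var v => some (Sum.inl (h v))
  | .ref v a => (propOf G h v a).map Sum.inr

def keysDefined (G : PGraph) (h : Var → Target) (ks : List KeyExpr) : Prop :=
  ∀ k ∈ ks, (KeyExpr.eval G h k).isSome

def keysEq (G : PGraph) (h h' : Var → Target) (ks : List KeyExpr) : Prop :=
  ∀ k ∈ ks, KeyExpr.eval G h k = KeyExpr.eval G h' k

/-- A PG-Key `(Q_s(x,ȳ), C_s ⇒ α(ν̄), Q_t(x,z̄), C_t)`. -/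
structure PGKey where
  x : Var
  Qs : Query
  Cs : List Pred
  kw : KW
  keys : List KeyExpr
  Qt : Query
  Ct : List Pred

def PGKey.wf (L : QLang) (ψ : PGKey) : Prop :=
  QueryIn L ψ.Qs ∧ QueryIn L ψ.Qt ∧ PredsIn L ψ.Cs ∧ PredsIn L ψ.Ct ∧
  ψ.x ∈ qvars ψ.Qs ∧ ψ.x ∈ qvars ψ.Qt ∧
  qvars ψ.Qs ∩ qvars ψ.Qt = {ψ.x} ∧
  (∀ p ∈ ψ.Cs, p.vars ⊆ qvars ψ.Qs) ∧
  (∀ p ∈ ψ.Ct, p.vars ⊆ qvars ψ.Qt) ∧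
  (∀ k ∈ ψ.keys, k.vars ⊆ qvars ψ.Qt)

def PGKey.sat (ψ : PGKey) (G : PGraph) : Prop :=
  match ψ.kw with
  | .mandatory =>
      ∀ hs, Match G ψ.Qs hs → satC G hs ψ.Cs →
        ∃ ht, Match G ψ.Qt ht ∧ ht ψ.x = hs ψ.x ∧ satC G ht ψ.Ct ∧
          keysDefined G ht ψ.keys
  | .singleton =>
      ∀ hs, Match G ψ.Qs hs → satC G hs ψ.Cs →
        ∀ ht ht', Match G ψ.Qt ht → satC G ht ψ.Ct → ht ψ.x = hs ψ.x →
          Match G ψ.Qt ht' → satC G ht' ψ.Ct → ht' ψ.x = hs ψ.x →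
          keysDefined G ht ψ.keys → keysDefined G ht' ψ.keys →
          keysEq G ht ht' ψ.keys
  | .exclusive =>
      ∀ hs hs', Match G ψ.Qs hs → satC G hs ψ.Cs →
        Match G ψ.Qs hs' → satC G hs' ψ.Cs →
        ∀ ht ht', Match G ψ.Qt ht → satC G ht ψ.Ct → ht ψ.x = hs ψ.x →
          Match G ψ.Qt ht' → satC G ht' ψ.Ct → ht' ψ.x = hs' ψ.x →
          keysDefined G ht ψ.keys → keysDefined G ht' ψ.keys →
          keysEq G ht ht' ψ.keys →
          hs ψ.x = hs' ψ.x

def PGKey.allVars (ψ : PGKey) : Finset Var :=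
  qvars ψ.Qs ∪ qvars ψ.Qt ∪
  (ψ.Cs ++ ψ.Ct).foldr (fun p s => p.vars ∪ s) ∅ ∪
  ψ.keys.foldr (fun k s => k.vars ∪ s) ∅ ∪ {ψ.x}

/-- Variable renaming on atoms, queries, predicates and key expressions. -/
def Atom.rename (σ : Var → Var) : Atom → Atom
  | .vertex x ls => .vertex (σ x) ls
  | .edge x e y ls => .edge (σ x) (σ e) (σ y) ls
  | .path x p y r => .path (σ x) (σ p) (σ y) r

def Query.rename (σ : Var → Var) (Q : Query) : Query := Q.map (Atom.rename σ)

def Pred.rename (σ : Var → Var) : Pred → Pred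
  | .propEq x a y b => .propEq (σ x) a (σ y) b
  | .propEqC x a c => .propEqC (σ x) a c
  | .ex x a => .ex (σ x) a
  | .idEq x y => .idEq (σ x) (σ y)
  | .propNe x a y b => .propNe (σ x) a (σ y) b
  | .propNeC x a c => .propNeC (σ x) a c
  | .idNe x y => .idNe (σ x) (σ y)

def KeyExpr.rename (σ : Var → Var) : KeyExpr → KeyExpr
  | .var v => .var (σ v)
  | .ref v a => .ref (σ v) a

/-- The existence predicates `ex(ν̄)` associated with a key expression. -/
def exPreds (ks : List KeyExpr) : List Pred :=
  ks.filterMap fun k =>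
    match k with
    | .var _ => none
    | .ref v a => some (.ex v a)

/-- The predicate expressing equality of a key-expression entry with its `σ`-copy. -/
def keyEqPred (σ : Var → Var) : KeyExpr → Pred
  | .var v => .idEq v (σ v)
  | .ref v a => .propEq v a (σ v) a

/-- The renaming that fixes `x` and otherwise applies `σ`. -/
def fixAt (x : Var) (σ : Var → Var) : Var → Var :=
  fun v => if v = x then x else σ v

/-- `G'` is an induced subgraph of `G`. -/
def InducedSubgraph (G' G : PGraph) : Prop :=
  G'.V ⊆ G.V ∧
  G'.E = G.E.filter (fun e => G.src e ∈ G'.V ∧ G.tgt e ∈ G'.V) ∧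
  ∀ o ∈ G'.V ∪ G'.E, G'.src o = G.src o ∧ G'.tgt o = G.tgt o ∧
    G'.lab o = G.lab o ∧ ∀ k, G'.prop o k = G.prop o k

/-- A constraint (given by its satisfaction relation) is expressible by a
finite set of constraints of the class `C`. -/
def Expressible (s : PGraph → Prop) (C : Set (PGraph → Prop)) : Prop :=
  ∃ Ψ : List (PGraph → Prop), (∀ ψ ∈ Ψ, ψ ∈ C) ∧ ∀ G, s G ↔ ∀ ψ ∈ Ψ, ψ G

/-- Expressiveness inclusion of constraint classes. -/
def ClassLE (C₁ C₂ : Set (PGraph → Prop)) : Prop :=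
  ∀ s ∈ C₁, Expressible s C₂

/-- Equal expressive power. -/
def ClassEquiv (C₁ C₂ : Set (PGraph → Prop)) : Prop :=
  ClassLE C₁ C₂ ∧ ClassLE C₂ C₁

/-- Strict expressiveness inclusion. -/
def ClassLT (C₁ C₂ : Set (PGraph → Prop)) : Prop :=
  ClassLE C₁ C₂ ∧ ∃ s ∈ C₂, ¬ Expressible s C₁

/-- The class GFD over the query language `L`. -/
def GFDc (L : QLang) : Set (PGraph → Prop) :=
  {s | ∃ φ : GFD, φ.wf L ∧ s = φ.sat}

/-- The class nGFD over `L`. -/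
def nGFDc (n : ℕ) (L : QLang) : Set (PGraph → Prop) :=
  {s | ∃ φ : GFD, φ.wf L ∧ φ.shared.length ≤ n ∧ s = φ.sat}

/-- The class GGD over `L`. -/
def GGDc (L : QLang) : Set (PGraph → Prop) :=
  {s | ∃ φ : GGD, φ.wf L ∧ s = φ.sat}

/-- The class nGGD over `L`. -/
def nGGDc (n : ℕ) (L : QLang) : Set (PGraph → Prop) :=
  {s | ∃ φ : GGD, φ.wf L ∧ φ.shared.length ≤ n ∧ s = φ.sat}

/-- The class PG-Keys over `L`. -/
def PGKc (L : QLang) : Set (PGraph → Prop) :=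
  {s | ∃ ψ : PGKey, ψ.wf L ∧ s = ψ.sat}

/-- The class mPG-Keys over `L`. -/
def mPGKc (L : QLang) : Set (PGraph → Prop) :=
  {s | ∃ ψ : PGKey, ψ.wf L ∧ ψ.kw = KW.mandatory ∧ s = ψ.sat}


/-- The GGD `φ = (x → y → z, ∅ ⇒ x → z, ∅)`, with `x = 0`, `y = 1`, `z = 2` and edge
variables `3, 4` in the source and `5` in the target. -/
def transGGD : GGD :=
  ⟨[0, 2], [Atom.edge 0 3 1 [], Atom.edge 1 4 2 []], [], [Atom.edge 0 5 2 []], []⟩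


/-! ### Auxiliary development for the separation proof -/

def eSrc : Obj → Obj
  | 3 => 0 | 4 => 1 | 5 => 2 | 6 => 0 | 7 => 1 | 8 => 0 | _ => 0
def eTgt : Obj → Obj
  | 3 => 0 | 4 => 1 | 5 => 2 | 6 => 1 | 7 => 2 | 8 => 2 | _ => 0

/-- The counterexample graph: vertices 0,1,2 each with a loop (edges 3,4,5),
plus edges 6 : 0→1 and 7 : 1→2 (no edge 0→2).  Not transitive. -/
def G2 : PGraph :=
  ⟨{0,1,2}, {3,4,5,6,7}, by decide, eSrc, eTgt, fun _ => ∅, fun _ _ => none,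
   by decide, by decide⟩

/-- The transitive closure of `G2`: adds edge 8 : 0→2.  A model of `transGGD`. -/
def Gm : PGraph :=
  ⟨{0,1,2}, {3,4,5,6,7,8}, by decide, eSrc, eTgt, fun _ => ∅, fun _ _ => none,
   by decide, by decide⟩

lemma hp2 : ∀ (o : Obj) (k : Key), G2.prop o k = none := fun _ _ => rfl
lemma hpm : ∀ (o : Obj) (k : Key), Gm.prop o k = none := fun _ _ => rfl
lemma hl2 : ∀ o, G2.lab o = ∅ := fun _ => rfl
lemma hlm : ∀ o, Gm.lab o = ∅ := fun _ => rfl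

/-- Pushforward of targets along a renaming of objects. -/
def mapT (σ : Obj → Obj) : Target → Target
  | .obj o => .obj (σ o)
  | .walk w => .walk ⟨σ w.start, w.edges.map σ⟩

@[simp] lemma mapT_id (t : Target) : mapT id t = t := by
  cases t with
  | obj o => rfl
  | walk w => cases w; simp [mapT]

lemma propOf_none {G : PGraph} (hp : ∀ o k, G.prop o k = none)
    (h : Var → Target) (x : Var) (a : Key) : propOf G h x a = none := by
  unfold propOf; cases h x <;> simp [hp]

/-- Satisfaction of an equality predicate transfers between property-free graphs
(along any object renaming). -/
lemma predsat_lift {G G' : PGraph} (hp : ∀ o k, G.prop o k = none)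
    (hp' : ∀ o k, G'.prop o k = none) (σ : Obj → Obj) {p : Pred} (hq : p.isEq)
    {h : Var → Target} (hs : p.sat G h) :
    p.sat G' (fun v => mapT σ (h v)) := by
  cases p with
  | propEq x a y b =>
      obtain ⟨v, hv, _⟩ := hs; rw [propOf_none hp] at hv; exact absurd hv (by simp)
  | propEqC x a c =>
      rw [Pred.sat, propOf_none hp] at hs; exact absurd hs (by simp)
  | ex x a =>
      rw [Pred.sat, propOf_none hp] at hs; exact absurd hs (by simp)
  | idEq x y =>
      rw [Pred.sat] at hs ⊢; rw [hs]
  | propNe x a y b => exact absurd hq (by simp [Pred.isEq])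
  | propNeC x a c => exact absurd hq (by simp [Pred.isEq])
  | idNe x y => exact absurd hq (by simp [Pred.isEq])

lemma predsat_free {G G' : PGraph} (hp : ∀ o k, G.prop o k = none)
    (hp' : ∀ o k, G'.prop o k = none) {p : Pred} (hq : p.isEq)
    {h : Var → Target} (hs : p.sat G h) : p.sat G' h := by
  have := predsat_lift hp hp' id hq hs
  simpa using this

lemma satC_free {G G' : PGraph} (hp : ∀ o k, G.prop o k = none)
    (hp' : ∀ o k, G'.prop o k = none) {C : List Pred} (hC : PredsIn CRPQeq C)
    {h : Var → Target} (hs : satC G h C) : satC G' h C :=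
  fun p hpC => predsat_free hp hp' (hC p hpC) (hs p hpC)

lemma satC_lift {G G' : PGraph} (hp : ∀ o k, G.prop o k = none)
    (hp' : ∀ o k, G'.prop o k = none) (σ : Obj → Obj) {C : List Pred}
    (hC : PredsIn CRPQeq C) {h : Var → Target} (hs : satC G h C) :
    satC G' (fun v => mapT σ (h v)) C :=
  fun p hpC => predsat_lift hp hp' σ (hC p hpC) (hs p hpC)

lemma forall2_lab_nil {G : PGraph} (hl : ∀ o, G.lab o = ∅) {es : List Obj}
    {word : List Lab} (h : List.Forall₂ (fun e l => l ∈ G.lab e) es word) :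
    es = [] ∧ word = [] := by
  cases h with
  | nil => exact ⟨rfl, rfl⟩
  | cons h _ => rw [hl] at h; exact absurd h (by simp)

/-- Homomorphisms of (label-free, property-free) property graphs. -/
structure IsHom (σ : Obj → Obj) (G G' : PGraph) : Prop where
  mapV : ∀ v ∈ G.V, σ v ∈ G'.V
  mapE : ∀ e ∈ G.E, σ e ∈ G'.E
  hsrc : ∀ e ∈ G.E, G'.src (σ e) = σ (G.src e)
  htgt : ∀ e ∈ G.E, G'.tgt (σ e) = σ (G.tgt e)

lemma atom_hom {G G' : PGraph} {σ : Obj → Obj} (hh : IsHom σ G G')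
    (hl : ∀ o, G.lab o = ∅) {h : Var → Target} {a : Atom}
    (ha : a.sat G h) : a.sat G' (fun v => mapT σ (h v)) := by
  cases a with
  | vertex x ls =>
      obtain ⟨o, hx, hV, hls⟩ := ha
      refine ⟨σ o, by simp [hx, mapT], hh.mapV o hV, fun l hl' => ?_⟩
      have := hls l hl'; rw [hl] at this; exact absurd this (by simp)
  | edge x e y ls =>
      obtain ⟨ox, oe, oy, hx, he, hy, hE, hso, hto, hls⟩ := ha
      refine ⟨σ ox, σ oe, σ oy, by simp [hx, mapT], by simp [he, mapT],
        by simp [hy, mapT], hh.mapE oe hE, by rw [hh.hsrc oe hE, hso],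
        by rw [hh.htgt oe hE, hto], fun l hl' => ?_⟩
      have := hls l hl'; rw [hl] at this; exact absurd this (by simp)
  | path x p y r =>
      obtain ⟨ox, w, oy, hx, hpw, hy, hst, hwf, hend, word, hword, hf2⟩ := ha
      obtain ⟨hes, hwd⟩ := forall2_lab_nil hl hf2
      have hoxV : ox ∈ G.V := by rw [hes] at hwf; exact hwf
      have hoy : oy = ox := by
        rw [← hend]; unfold Walk.endpt; rw [hes]; exact hst.symm ▸ rfl
      refine ⟨σ ox, ⟨σ ox, []⟩, σ oy, by simp [hx, mapT],
        by simp [hpw, mapT, hst, hes], by simp [hy, mapT], rfl,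
        hh.mapV ox hoxV, by simp [Walk.endpt, hoy], word, hword, ?_⟩
      rw [hwd]; exact List.Forall₂.nil

lemma match_hom {G G' : PGraph} {σ : Obj → Obj} (hh : IsHom σ G G')
    (hl : ∀ o, G.lab o = ∅) {h : Var → Target} {Q : Query}
    (hm : Match G Q h) : Match G' Q (fun v => mapT σ (h v)) :=
  fun a ha => atom_hom hh hl (hm a ha)

lemma id_hom : IsHom id G2 Gm := ⟨by decide, by decide, by decide, by decide⟩

lemma match_up {Q : Query} {h : Var → Target} (hm : Match G2 Q h) :
    Match Gm Q h := by
  have := match_hom id_hom hl2 hm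
  simpa using this

/-- The two pointed retractions from `Gm` back onto `G2`. -/
def r1 : Obj → Obj
  | 0 => 0 | 1 => 1 | 2 => 1 | 3 => 3 | 4 => 4 | 5 => 4 | 6 => 6 | 7 => 4 | 8 => 6 | _ => 0
def r2 : Obj → Obj
  | 0 => 1 | 1 => 1 | 2 => 2 | 3 => 4 | 4 => 4 | 5 => 5 | 6 => 4 | 7 => 7 | 8 => 7 | _ => 0

lemma r1_hom : IsHom r1 Gm G2 := ⟨by decide, by decide, by decide, by decide⟩
lemma r2_hom : IsHom r2 Gm G2 := ⟨by decide, by decide, by decide, by decide⟩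

lemma cover : ∀ o ∈ G2.V ∪ G2.E, r1 o = o ∨ r2 o = o := by decide

lemma retract_at : ∀ o ∈ G2.V ∪ G2.E, ∃ σ, IsHom σ Gm G2 ∧ σ o = o := by
  intro o ho
  rcases cover o ho with h | h
  · exact ⟨r1, r1_hom, h⟩
  · exact ⟨r2, r2_hom, h⟩

lemma qvars_mem {Q : Query} {x : Var} : x ∈ qvars Q ↔ ∃ a ∈ Q, x ∈ a.vars := by
  induction Q with
  | nil => simp [qvars]
  | cons a Q ih =>
      simp only [qvars, List.foldr_cons] at ih ⊢
      simp [Finset.mem_union, ih]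

/-- Characterization of the possible values of a constrained variable over a
label-free graph. -/
lemma anchor {G : PGraph} (hl : ∀ o, G.lab o = ∅) {Q : Query} {h : Var → Target}
    {x : Var} (hx : x ∈ qvars Q) (hm : Match G Q h) :
    (∃ o, h x = .obj o ∧ o ∈ G.V ∪ G.E) ∨ (∃ s, h x = .walk ⟨s, []⟩ ∧ s ∈ G.V ∪ G.E) := by
  obtain ⟨a, haQ, hxa⟩ := qvars_mem.mp hx
  have hsat := hm a haQ
  cases a with
  | vertex y ls =>
      obtain ⟨o, hy, hV, _⟩ := hsat
      simp [Atom.vars] at hxa; subst hxa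
      exact Or.inl ⟨o, hy, Finset.mem_union_left _ hV⟩
  | edge y e z ls =>
      obtain ⟨oy, oe, oz, hy, he, hz, hE, hso, hto, _⟩ := hsat
      simp [Atom.vars] at hxa
      rcases hxa with rfl | rfl | rfl
      · exact Or.inl ⟨oy, hy, Finset.mem_union_left _ (hso ▸ G.src_mem oe hE)⟩
      · exact Or.inl ⟨oe, he, Finset.mem_union_right _ hE⟩
      · exact Or.inl ⟨oz, hz, Finset.mem_union_left _ (hto ▸ G.tgt_mem oe hE)⟩
  | path y p z r =>
      obtain ⟨oy, w, oz, hy, hpw, hz, hst, hwf, hend, word, hword, hf2⟩ := hsat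
      obtain ⟨hes, _⟩ := forall2_lab_nil hl hf2
      have hoyV : oy ∈ G.V := by rw [hes] at hwf; exact hwf
      have hoz : oz = oy := by
        rw [← hend]; unfold Walk.endpt; rw [hes]; exact hst.symm ▸ rfl
      simp [Atom.vars] at hxa
      rcases hxa with rfl | rfl | rfl
      · exact Or.inl ⟨oy, hy, Finset.mem_union_left _ hoyV⟩
      · refine Or.inr ⟨oy, ?_, Finset.mem_union_left _ hoyV⟩
        rw [hpw]; congr 1; cases w; simp at hst hes; rw [hst, hes]
      · exact Or.inl ⟨oz, hz, Finset.mem_union_left _ (hoz ▸ hoyV)⟩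

@[simp] lemma eval_var (G : PGraph) (h : Var → Target) (v : Var) :
    KeyExpr.eval G h (.var v) = some (Sum.inl (h v)) := rfl

lemma eval_ref_none {G : PGraph} (hp : ∀ o k, G.prop o k = none)
    (h : Var → Target) (v : Var) (a : Key) :
    KeyExpr.eval G h (.ref v a) = none := by
  simp [KeyExpr.eval, propOf_none hp]

lemma kd_free {G G' : PGraph} (hp : ∀ o k, G.prop o k = none)
    (hp' : ∀ o k, G'.prop o k = none) {h : Var → Target} {ks : List KeyExpr}
    (hk : keysDefined G h ks) : keysDefined G' h ks := by
  intro k hkk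
  cases k with
  | var v => simp
  | ref v a =>
      have := hk (KeyExpr.ref v a) hkk
      rw [eval_ref_none hp] at this
      exact absurd this (by simp)

lemma ke_free {G G' : PGraph} (hp : ∀ o k, G.prop o k = none)
    (hp' : ∀ o k, G'.prop o k = none) {h h' : Var → Target} {ks : List KeyExpr}
    (he : keysEq G h h' ks) : keysEq G' h h' ks := by
  intro k hkk
  cases k with
  | var v =>
      have := he (KeyExpr.var v) hkk
      simp at this ⊢; exact this
  | ref v a => rw [eval_ref_none hp', eval_ref_none hp']

/-- `Gm` satisfies the transitivity GGD. -/
lemma comp_edge : ∀ e1 ∈ Gm.E, ∀ e2 ∈ Gm.E, Gm.tgt e1 = Gm.src e2 →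
    ∃ e ∈ Gm.E, Gm.src e = Gm.src e1 ∧ Gm.tgt e = Gm.tgt e2 := by decide

lemma Gm_model : transGGD.sat Gm := by
  intro hs hm _
  have h1 := hm (Atom.edge 0 3 1 []) (by simp [transGGD])
  have h2 := hm (Atom.edge 1 4 2 []) (by simp [transGGD])
  obtain ⟨ox, oe1, oy, hx0, hx3, hx1, hE1, hs1, ht1, _⟩ := h1
  obtain ⟨oy', oe2, oz, hx1', hx4, hx2, hE2, hs2, ht2, _⟩ := h2
  have hyy : oy' = oy := by
    rw [hx1] at hx1'; exact (Target.obj.injEq _ _).mp hx1'.symm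
  obtain ⟨e, heE, hesrc, hetgt⟩ :=
    comp_edge oe1 hE1 oe2 hE2 (by rw [ht1, hs2, hyy])
  refine ⟨fun v => if v = 5 then Target.obj e else hs v, ?_, ?_, ?_⟩
  · intro a ha
    simp [transGGD] at ha; subst ha
    exact ⟨ox, e, oz, by simpa using hx0, by simp, by simpa using hx2,
      heE, by rw [hesrc, hs1], by rw [hetgt, ht2], by simp⟩
  · intro v hv
    simp [transGGD] at hv
    rcases hv with rfl | rfl <;> simp
  · intro p hp; simp [transGGD] at hp

/-- `G2` violates the transitivity GGD. -/
lemma G2_no02 : ¬ ∃ e ∈ G2.E, G2.src e = 0 ∧ G2.tgt e = 2 := by decide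

lemma G2_viol : ¬ transGGD.sat G2 := by
  intro hsat
  have hmatch : Match G2 transGGD.Qs
      (fun v => Target.obj (if v = 0 then 0 else if v = 1 then 1 else
        if v = 2 then 2 else if v = 3 then 6 else 7)) := by
    intro a ha
    simp [transGGD] at ha
    rcases ha with rfl | rfl
    · exact ⟨0, 6, 1, by norm_num, by norm_num, by norm_num, by decide, rfl, rfl, by simp⟩
    · exact ⟨1, 7, 2, by norm_num, by norm_num, by norm_num, by decide, rfl, rfl, by simp⟩
  obtain ⟨ht, hmt, hsh, _⟩ := hsat _ hmatch (by intro p hp; simp [transGGD] at hp)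
  have h0 := hsh 0 (by simp [transGGD])
  have h2 := hsh 2 (by simp [transGGD])
  have hone := hmt (Atom.edge 0 5 2 []) (by simp [transGGD])
  obtain ⟨ox, oe, oz, hx0, hx5, hx2, hE, hso, hto, _⟩ := hone
  rw [h0] at hx0; rw [h2] at hx2
  simp at hx0 hx2
  exact G2_no02 ⟨oe, hE, by rw [hso, ← hx0], by rw [hto, ← hx2]⟩

/-- The key transfer lemma: any PG-Key over CRPQ[=] satisfied by the model `Gm`
is satisfied by the counterexample `G2`. -/
lemma pgk_transfer (ψ : PGKey) (hwf : ψ.wf CRPQeq) (hM : ψ.sat Gm) : ψ.sat G2 := by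
  obtain ⟨x, Qs, Cs, kw, keys, Qt, Ct⟩ := ψ
  obtain ⟨_, _, hCs, hCt, hxQs, _, _, _, _, _⟩ := hwf
  cases kw with
  | mandatory =>
      intro hs hms hcs
      obtain ⟨ht, hmt, hanc, hct, hkd⟩ :=
        hM hs (match_up hms) (satC_free hp2 hpm hCs hcs)
      rcases anchor hl2 hxQs hms with ⟨o, hxo, hoVE⟩ | ⟨s, hxs, hsVE⟩
      · obtain ⟨σ, hσ, hfix⟩ := retract_at o hoVE
        refine ⟨fun v => mapT σ (ht v), match_hom hσ hlm hmt, ?_, 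
          satC_lift hpm hp2 σ hCt hct, ?_⟩
        · show mapT σ (ht x) = hs x
          rw [hanc, hxo]; simp [mapT, hfix]
        · intro k hkk
          cases k with
          | var v => simp
          | ref v a =>
              have := hkd (KeyExpr.ref v a) hkk
              rw [eval_ref_none hpm] at this
              exact absurd this (by simp)
      · obtain ⟨σ, hσ, hfix⟩ := retract_at s hsVE
        refine ⟨fun v => mapT σ (ht v), match_hom hσ hlm hmt, ?_, 
          satC_lift hpm hp2 σ hCt hct, ?_⟩
        · show mapT σ (ht x) = hs x
          rw [hanc, hxs]; simp [mapT, hfix]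
        · intro k hkk
          cases k with
          | var v => simp
          | ref v a =>
              have := hkd (KeyExpr.ref v a) hkk
              rw [eval_ref_none hpm] at this
              exact absurd this (by simp)
  | singleton =>
      intro hs hms hcs ht ht' hmt hct hax hmt' hct' hax' hkd hkd'
      have hres := hM hs (match_up hms) (satC_free hp2 hpm hCs hcs)
        ht ht' (match_up hmt) (satC_free hp2 hpm hCt hct) hax
        (match_up hmt') (satC_free hp2 hpm hCt hct') hax'
        (kd_free hp2 hpm hkd) (kd_free hp2 hpm hkd')
      exact ke_free hpm hp2 hres
  | exclusive =>
      intro hs hs' hms hcs hms' hcs' ht ht' hmt hct hax hmt' hct' hax' hkd hkd' hke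
      exact hM hs hs' (match_up hms) (satC_free hp2 hpm hCs hcs)
        (match_up hms') (satC_free hp2 hpm hCs hcs')
        ht ht' (match_up hmt) (satC_free hp2 hpm hCt hct) hax
        (match_up hmt') (satC_free hp2 hpm hCt hct') hax'
        (kd_free hp2 hpm hkd) (kd_free hp2 hpm hkd')
        (ke_free hp2 hpm hke)

lemma transGGD_wf : transGGD.wf CRPQeq := by
  refine ⟨?_, ?_, ?_, ?_, ?_, ?_, ?_, ?_⟩
  · intro a ha hp
    simp [transGGD] at ha
    rcases ha with rfl | rfl <;> exact hp.elim
  · intro a ha hp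
    simp [transGGD] at ha; subst ha; exact hp.elim
  · intro p hp; simp [transGGD] at hp
  · intro p hp; simp [transGGD] at hp
  · decide
  · decide
  · intro p hp; simp [transGGD] at hp
  · intro p hp; simp [transGGD] at hp

lemma transGGD_not_expr : ¬ Expressible transGGD.sat (PGKc CRPQeq) := by
  rintro ⟨Ψ, hmem, hiff⟩
  have h2 : ∀ ψ ∈ Ψ, ψ G2 := by
    intro ψ hψ
    obtain ⟨φ, hwf, rfl⟩ := hmem ψ hψ
    exact pgk_transfer φ hwf (((hiff Gm).mp Gm_model) φ.sat hψ)
  exact G2_viol ((hiff G2).mpr h2)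

/-- over CRPQ[=], some GGD-expressible constraints are not expressible in
PG-Keys; in particular `(x → y → z, ∅ ⇒ x → z, ∅)`. -/
theorem ggd_not_in_pgkeys_crpq_eq :
    transGGD.wf CRPQeq ∧
    ¬ Expressible transGGD.sat (PGKc CRPQeq) ∧
    ∃ s ∈ GGDc CRPQeq, ¬ Expressible s (PGKc CRPQeq) := by
  refine ⟨transGGD_wf, transGGD_not_expr, transGGD.sat, ⟨transGGD, transGGD_wf, rfl⟩,
    transGGD_not_expr⟩

end PGC
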